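/- A subset Θ ⊆ Δ satisfies ω(Θ) = Θ if and only if every γ ∈ Δ \ Θ is non-orthogonal to some element of κ(Θ) ∪ {μ₀}. Consequently, if ω(Θ) = Θ and Θ ⊆ Θ′ ⊆ Δ, then ω(Θ′) = Θ′. -/

import Mathlib

noncomputable section

open scoped RealInnerProductSpace

variable {V : Type*} [NormedAddCommGroup V] [InnerProductSpace ℝ V] [FiniteDimensional ℝ V]

/-- The reflection in the vector `γ` (as a function). -/
def sRefl (γ v : V) : V := v - (2 * ⟪v, γ⟫ / ⟪γ, γ⟫) • γ

/-- The coroot `γ∨ = 2γ/⟨γ,γ⟩` of `γ`. -/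
def coroot (γ : V) : V := (2 / ⟪γ, γ⟫) • γ

/-- The Weyl group `W`: the subgroup of linear automorphisms generated by the
reflections in the roots. -/
def weylGroup (Φ : Finset V) : Subgroup (V ≃ₗ[ℝ] V) :=
  Subgroup.closure {w : V ≃ₗ[ℝ] V | ∃ γ ∈ Φ, ∀ v, w v = sRefl γ v}

/-- `Φ_w = {γ ∈ Φ⁺ : w⁻¹ γ ∈ −Φ⁺}`. -/
def inversions (Φpos : Finset V) (w : V ≃ₗ[ℝ] V) : Set V :=
  {γ | γ ∈ Φpos ∧ -(w.symm γ) ∈ Φpos}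

/-- `ℓ(w) = #Φ_w`. -/
def len (Φpos : Finset V) (w : V ≃ₗ[ℝ] V) : ℕ := (inversions Φpos w).ncard

/-- `Φ^P = Φ ∩ span(Δ^P)`. -/
def levi (Φ ΔP : Finset V) : Set V :=
  {γ | γ ∈ Φ ∧ γ ∈ Submodule.span ℝ (ΔP : Set V)}

/-- `W_P = {w ∈ W : Φ_w ∩ Φ^P = ∅}`, the minimal length coset representatives of `W^P\W`. -/
def minimalCosetReps (Φ Φpos ΔP : Finset V) : Set (V ≃ₗ[ℝ] V) :=
  {w | w ∈ weylGroup Φ ∧ inversions Φpos w ∩ levi Φ ΔP = ∅}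

/-- `pr_S`: the orthogonal projection onto the orthogonal complement of `span S`. -/
def pr (S : Set V) (v : V) : V :=
  (Submodule.orthogonalProjectionOnto (Submodule.span ℝ S)ᗮ v : V)

/-- `Φ` is a finite (possibly non-reduced) root system spanning `V`, with base `Δ`
and associated positive system `Φpos`. -/
structure IsRootBase (Φ Δ Φpos : Finset V) : Prop where
  span_top : Submodule.span ℝ (Φ : Set V) = ⊤
  zero_not_mem : (0 : V) ∉ Φ
  refl_mem : ∀ γ ∈ Φ, ∀ δ ∈ Φ, sRefl γ δ ∈ Φ
  base_subset_pos : (Δ : Set V) ⊆ (Φpos : Set V)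
  pos_subset : (Φpos : Set V) ⊆ (Φ : Set V)
  mem_or_neg_mem : ∀ γ ∈ Φ, γ ∈ Φpos ∨ -γ ∈ Φpos
  not_mem_and_neg_mem : ∀ γ ∈ Φpos, -γ ∉ Φpos
  indep : LinearIndependent ℝ (fun x : (Δ : Set V) => (x : V))
  pos_comb : ∀ γ ∈ Φpos, ∃ c : V → ℝ, (∀ α ∈ Δ, 0 ≤ c α) ∧ γ = ∑ α ∈ Δ, c α • α

/-- A set of vectors is connected if the graph on it joining two vectors
exactly when they are non-orthogonal is connected. -/
def nonOrthConnected {V : Type*} [NormedAddCommGroup V] [InnerProductSpace ℝ V]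
    (T : Set V) : Prop :=
  ∀ x ∈ T, ∀ y ∈ T, Relation.ReflTransGen (fun a b => a ∈ T ∧ b ∈ T ∧ ⟪a, b⟫ ≠ 0) x y

/-- `Θ` is σ-connected (relative to the highest weight `μ₀`): the non-orthogonality
graph on `Θ ∪ {μ₀}` is connected. -/
def sigmaConn {V : Type*} [NormedAddCommGroup V] [InnerProductSpace ℝ V]
    (μ₀ : V) (Θ : Set V) : Prop :=
  nonOrthConnected (insert μ₀ Θ)

/-- `κ(Θ)`: the union of all σ-connected subsets of `Θ`
(the largest σ-connected subset of `Θ`). -/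
def kap {V : Type*} [NormedAddCommGroup V] [InnerProductSpace ℝ V]
    (μ₀ : V) (Θ : Set V) : Set V :=
  ⋃₀ {Υ : Set V | Υ ⊆ Θ ∧ sigmaConn μ₀ Υ}

/-- `ω(Θ)`: the union of all `Υ ⊆ Δ` with `κ(Υ) = κ(Θ)` (the largest such subset). -/
def om {V : Type*} [NormedAddCommGroup V] [InnerProductSpace ℝ V]
    (μ₀ : V) (Δ : Finset V) (Θ : Set V) : Set V :=
  ⋃₀ {Υ : Set V | Υ ⊆ (Δ : Set V) ∧ kap μ₀ Υ = kap μ₀ Θ}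

/-! A vertex of `κ(Θ)` is a vertex of `Θ` joined to `μ₀` by a path in the non-orthogonality
graph on `Θ ∪ {μ₀}`, so an element of `Δ \ Θ` orthogonal to `κ(Θ) ∪ {μ₀}` can be added to `Θ`
without changing `κ`; conversely, any element of `Δ \ Θ` adjacent to `κ(Θ) ∪ {μ₀}` enlarges
`κ` as soon as it is added. Since `κ` is monotone, the criterion passes to supersets. -/

section SigmaConnected

open Relation

variable {V : Type*} [NormedAddCommGroup V] [InnerProductSpace ℝ V]

def nonOrthAdj (T : Set V) (a b : V) : Prop := a ∈ T ∧ b ∈ T ∧ ⟪a, b⟫ ≠ 0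

theorem nonOrthAdj.mono {T T' : Set V} (h : T ⊆ T') {a b : V} (hab : nonOrthAdj T a b) :
    nonOrthAdj T' a b :=
  ⟨h hab.1, h hab.2.1, hab.2.2⟩

instance (T : Set V) : Std.Symm (nonOrthAdj T) where
  symm _ _ h := ⟨h.2.1, h.1, by rw [real_inner_comm]; exact h.2.2⟩

theorem reflTransGen_nonOrthAdj_of_subset {T S : Set V} {x₀ y : V}
    (hS : ∀ a ∈ T, ReflTransGen (nonOrthAdj T) a x₀ → a ∈ S)
    (h : ReflTransGen (nonOrthAdj T) y x₀) :
    ReflTransGen (nonOrthAdj S) y x₀ := by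
  induction h using ReflTransGen.head_induction_on with
  | refl => exact .refl
  | head hab hb ih => exact .head ⟨hS _ hab.1 (.head hab hb), hS _ hab.2.1 hb, hab.2.2⟩ ih

variable {μ₀ γ x : V} {Θ Θ' Υ : Set V}

theorem sigmaConn_iff :
    sigmaConn μ₀ Θ ↔ ∀ x ∈ Θ, ReflTransGen (nonOrthAdj (insert μ₀ Θ)) x μ₀ := by
  refine ⟨fun h x hx => h x (Set.mem_insert_of_mem _ hx) μ₀ (Set.mem_insert _ _), fun h => ?_⟩
  have reach : ∀ y ∈ insert μ₀ Θ, ReflTransGen (nonOrthAdj (insert μ₀ Θ)) y μ₀ := by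
    rintro y (rfl | hy)
    exacts [.refl, h y hy]
  exact fun y hy z hz => (reach y hy).trans (Std.Symm.symm _ _ (reach z hz))

theorem mem_kap_iff :
    x ∈ kap μ₀ Θ ↔ x ∈ Θ ∧ ReflTransGen (nonOrthAdj (insert μ₀ Θ)) x μ₀ := by
  constructor
  · rintro ⟨Υ, ⟨hΥΘ, hΥ⟩, hx⟩
    exact ⟨hΥΘ hx, ReflTransGen.mono (fun _ _ => nonOrthAdj.mono
      (Set.insert_subset_insert hΥΘ)) _ _ (sigmaConn_iff.1 hΥ x hx)⟩
  · rintro ⟨hx, hreach⟩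
    let C := {y | y ∈ Θ ∧ ReflTransGen (nonOrthAdj (insert μ₀ Θ)) y μ₀}
    have hC_reach : ∀ a ∈ insert μ₀ Θ, ReflTransGen (nonOrthAdj (insert μ₀ Θ)) a μ₀ →
        a ∈ insert μ₀ C := by
      rintro a (rfl | ha) hreach_a
      exacts [Set.mem_insert _ _, Set.mem_insert_of_mem _ ⟨ha, hreach_a⟩]
    have hC : sigmaConn μ₀ C :=
      sigmaConn_iff.2 fun y hy => reflTransGen_nonOrthAdj_of_subset hC_reach hy.2
    exact ⟨C, ⟨fun y hy => hy.1, hC⟩, hx, hreach⟩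

theorem kap_subset : kap μ₀ Θ ⊆ Θ := fun _ hx => (mem_kap_iff.1 hx).1

theorem kap_mono (h : Θ ⊆ Θ') : kap μ₀ Θ ⊆ kap μ₀ Θ' := by
  rintro x ⟨Υ, ⟨hΥ, hconn⟩, hx⟩
  exact ⟨Υ, ⟨hΥ.trans h, hconn⟩, hx⟩

theorem mem_kap_of_inner_ne_zero (hγ : γ ∈ Θ) (hx : x ∈ insert μ₀ (kap μ₀ Θ))
    (hγx : ⟪γ, x⟫ ≠ 0) : γ ∈ kap μ₀ Θ := by
  refine mem_kap_iff.2 ⟨hγ, ?_⟩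
  rcases hx with rfl | hx
  · exact .single ⟨Set.mem_insert_of_mem _ hγ, Set.mem_insert _ _, hγx⟩
  · obtain ⟨hxΘ, hreach⟩ := mem_kap_iff.1 hx
    exact .head ⟨Set.mem_insert_of_mem _ hγ, Set.mem_insert_of_mem _ hxΘ, hγx⟩ hreach

theorem kap_insert_of_forall_inner_eq_zero (hγμ : γ ≠ μ₀)
    (hγ : ∀ x ∈ insert μ₀ (kap μ₀ Θ), ⟪γ, x⟫ = 0) : kap μ₀ (insert γ Θ) = kap μ₀ Θ := by
  refine Set.Subset.antisymm ?_ (kap_mono (Set.subset_insert γ Θ))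
  have reach_mem : ∀ a, ReflTransGen (nonOrthAdj (insert μ₀ (insert γ Θ))) a μ₀ →
      a ∈ insert μ₀ (kap μ₀ Θ) := by
    intro a ha
    induction ha using ReflTransGen.head_induction_on with
    | refl => exact Set.mem_insert _ _
    | head hab _ hb =>
      obtain ⟨ha, -, hne⟩ := hab
      rcases ha with rfl | rfl | ha
      · exact Set.mem_insert _ _
      · exact absurd (hγ _ hb) hne
      · exact Set.mem_insert_of_mem _ (mem_kap_of_inner_ne_zero ha hb hne)
  intro x hx
  obtain ⟨hxΘ, hreach⟩ := mem_kap_iff.1 hx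
  rcases reach_mem x hreach with rfl | hx'
  · rcases hxΘ with rfl | hxΘ
    exacts [absurd rfl hγμ, mem_kap_iff.2 ⟨hxΘ, .refl⟩]
  · exact hx'

theorem subset_om_of_kap_eq {Δ : Finset V} (hΥ : Υ ⊆ Δ) (h : kap μ₀ Υ = kap μ₀ Θ) :
    Υ ⊆ om μ₀ Δ Θ :=
  Set.subset_sUnion_of_mem ⟨hΥ, h⟩

theorem om_eq_self_iff {Δ : Finset V} (hμ₀ : μ₀ ≠ 0) (hΘ : Θ ⊆ Δ) :
    om μ₀ Δ Θ = Θ ↔ ∀ γ ∈ (Δ : Set V) \ Θ, ∃ x ∈ insert μ₀ (kap μ₀ Θ), ⟪γ, x⟫ ≠ 0 := by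
  constructor
  · intro hom γ ⟨hγΔ, hγΘ⟩
    by_contra! horth
    have hγμ : γ ≠ μ₀ := by
      rintro rfl
      exact hμ₀ (inner_self_eq_zero.1 (horth γ (Set.mem_insert _ _)))
    have := subset_om_of_kap_eq (Set.insert_subset hγΔ hΘ)
      (kap_insert_of_forall_inner_eq_zero hγμ horth)
    exact hγΘ (hom ▸ this (Set.mem_insert γ Θ))
  · intro H
    refine Set.Subset.antisymm ?_ (subset_om_of_kap_eq hΘ rfl)
    rintro γ ⟨Υ, ⟨hΥΔ, hκ⟩, hγΥ⟩
    by_contra hγΘ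
    obtain ⟨x, hx, hγx⟩ := H γ ⟨hΥΔ hγΥ, hγΘ⟩
    have hγκ : γ ∈ kap μ₀ Υ := mem_kap_of_inner_ne_zero hγΥ (hκ ▸ hx) hγx
    exact hγΘ (kap_subset (hκ ▸ hγκ))

theorem om_eq_self_of_subset {Δ : Finset V} (hμ₀ : μ₀ ≠ 0) (hΘ : Θ ⊆ Δ) (hom : om μ₀ Δ Θ = Θ)
    (hΘΘ' : Θ ⊆ Θ') (hΘ' : Θ' ⊆ Δ) : om μ₀ Δ Θ' = Θ' := by
  refine (om_eq_self_iff hμ₀ hΘ').2 fun γ ⟨hγΔ, hγΘ'⟩ => ?_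
  obtain ⟨x, hx, hγx⟩ := (om_eq_self_iff hμ₀ hΘ).1 hom γ ⟨hγΔ, fun h => hγΘ' (hΘΘ' h)⟩
  exact ⟨x, Set.insert_subset_insert (kap_mono hΘΘ') hx, hγx⟩

end SigmaConnected

theorem sigmaSaturatedCriterion_general
    {V : Type*} [NormedAddCommGroup V] [InnerProductSpace ℝ V]
    (Δ : Finset V)
    (μ₀ : V) (hμ₀ : μ₀ ≠ 0)
    (Θ : Set V) (hΘ : Θ ⊆ (Δ : Set V)) :
    (om μ₀ Δ Θ = Θ ↔
      ∀ γ ∈ (Δ : Set V) \ Θ, ∃ x ∈ insert μ₀ (kap μ₀ Θ), ⟪γ, x⟫ ≠ 0) ∧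
    (∀ Θ' : Set V, om μ₀ Δ Θ = Θ → Θ ⊆ Θ' → Θ' ⊆ (Δ : Set V) → om μ₀ Δ Θ' = Θ') :=
  ⟨om_eq_self_iff hμ₀ hΘ, fun _ hom hΘΘ' hΘ' => om_eq_self_of_subset hμ₀ hΘ hom hΘΘ' hΘ'⟩

/-- equation (eqnSigmaSaturatedCondition) of the paper and the
heredity of σ-saturation to supersets. `ω(Θ) = Θ` iff every `γ ∈ Δ \ Θ` is
non-orthogonal to some element of `κ(Θ) ∪ {μ₀}`; consequently, if `ω(Θ) = Θ`
and `Θ ⊆ Θ′ ⊆ Δ` then `ω(Θ′) = Θ′`. -/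
theorem sigmaSaturatedCriterion
    {V : Type*} [NormedAddCommGroup V] [InnerProductSpace ℝ V] [FiniteDimensional ℝ V]
    (Φ Δ Φpos : Finset V) (h : IsRootBase Φ Δ Φpos)
    (μ₀ : V) (hμ₀ : μ₀ ≠ 0) (hdom : ∀ α ∈ Δ, 0 ≤ ⟪μ₀, coroot α⟫)
    (Θ : Set V) (hΘ : Θ ⊆ (Δ : Set V)) :
    (om μ₀ Δ Θ = Θ ↔
      ∀ γ ∈ (Δ : Set V) \ Θ, ∃ x ∈ insert μ₀ (kap μ₀ Θ), ⟪γ, x⟫ ≠ 0) ∧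
    (∀ Θ' : Set V, om μ₀ Δ Θ = Θ → Θ ⊆ Θ' → Θ' ⊆ (Δ : Set V) → om μ₀ Δ Θ' = Θ') :=
  sigmaSaturatedCriterion_general Δ μ₀ hμ₀ Θ hΘ
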